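/- arXiv:1902.07941 — 4 statements merged into one kernel-verified Lean document; each statement's English description precedes it below -/
import Mathlib

section
/- The map X ↦ Φ(X⁻¹)⁻¹ is concave on positive definite matrices: for positive definite X, Y and t ∈ [0,1], Φ((tX + (1−t)Y)⁻¹)⁻¹ ≥ tΦ(X⁻¹)⁻¹ + (1−t)Φ(Y⁻¹)⁻¹, where Φ is a strictly positive linear map between matrix algebras. -/
/-!
Write `H X = Φ(X⁻¹)⁻¹`. As `H (c • X) = c • H X`, concavity reduces to superadditivity
`H X + H Y ≤ H (X + Y)`. For `C = (X + Y)⁻¹` we have `C X C + C Y C = C`, so superadditivity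
follows by adding the inequalities `Φ C * H Z * Φ C ≤ Φ (C Z C)` for `Z = X, Y` and conjugating
by `(Φ C)⁻¹`. These are instances of `Φ C (Φ A)⁻¹ Φ C ≤ Φ (C A⁻¹ C)`, a Schur complement
condition for the block matrix `[[Φ A, Φ C], [Φ C, Φ (C A⁻¹ C)]]`. Diagonalising `A = L Lᴴ` and
`C = L D Lᴴ` simultaneously writes this block matrix as a sum of blocks `[[P, r P], [r P, r² P]]`
with `P` positive semidefinite and `r` real, each of which is positive semidefinite; this is why
positivity of `Φ`, rather than complete positivity, suffices.
-/

open Matrix ComplexOrder Filter Topology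

namespace Matrix

variable {𝕜 ι κ ν : Type*} [RCLike 𝕜]

theorem inv_smul_of_ne_zero {K : Type*} [Field K] [Fintype ι] [DecidableEq ι] (A : Matrix ι ι K)
    {c : K} (hc : c ≠ 0) : (c • A)⁻¹ = c⁻¹ • A⁻¹ := by
  by_cases hA : IsUnit A.det
  · exact inv_smul' A (Units.mk0 c hc) hA
  · have hcA : ¬IsUnit (c • A).det := by
      rwa [det_smul, IsUnit.mul_iff, not_and_or, or_iff_right (by simp [hc])]
    rw [nonsing_inv_apply_not_isUnit _ hA, nonsing_inv_apply_not_isUnit _ hcA, smul_zero]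

theorem PosSemidef.of_forall_posDef_add_smul [Fintype ι] {A B : Matrix ι ι 𝕜}
    (hB : B.IsHermitian) (h : ∀ ε : ℝ, 0 < ε → (A + (ε : 𝕜) • B).PosDef) : A.PosSemidef := by
  have hA : A.IsHermitian := by simpa using (h 1 one_pos).isHermitian.sub hB
  refine .of_dotProduct_mulVec_nonneg hA fun x => ?_
  have hcont : Continuous fun ε : ℝ => star x ⬝ᵥ (A *ᵥ x) + (ε : 𝕜) * (star x ⬝ᵥ (B *ᵥ x)) := by
    fun_prop
  have hlim : Tendsto (fun ε : ℝ => star x ⬝ᵥ ((A + (ε : 𝕜) • B) *ᵥ x)) (𝓝[>] 0)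
      (𝓝 (star x ⬝ᵥ (A *ᵥ x))) := by
    simp only [add_mulVec, smul_mulVec, dotProduct_add, dotProduct_smul, smul_eq_mul]
    exact tendsto_nhdsWithin_of_tendsto_nhds (by simpa using hcont.tendsto 0)
  exact ge_of_tendsto hlim (eventually_nhdsWithin_of_forall fun ε hε =>
    (h ε hε).posSemidef.dotProduct_mulVec_nonneg x)

theorem PosSemidef.map_of_map_posDef [Fintype κ] [DecidableEq ι]
    {Φ : Matrix ι ι 𝕜 →ₗ[𝕜] Matrix κ κ 𝕜} (hΦ : ∀ A, A.PosDef → (Φ A).PosDef)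
    {M : Matrix ι ι 𝕜} (hM : M.PosSemidef) : (Φ M).PosSemidef :=
  .of_forall_posDef_add_smul (hΦ 1 .one).isHermitian fun ε hε => by
    simpa using hΦ _ <| PosDef.posSemidef_add hM <|
      PosDef.one.smul (RCLike.ofReal_pos (K := 𝕜) |>.mpr hε)

theorem PosSemidef.fromBlocks_smul [Fintype κ] {P : Matrix κ κ 𝕜}
    (hP : P.PosSemidef) (r : ℝ) : (fromBlocks P (r • P) (r • P) ((r * r) • P)).PosSemidef := by
  classical
  have h := hP.mul_mul_conjTranspose_same
    (fromRows (1 : Matrix κ κ 𝕜) ((r : 𝕜) • (1 : Matrix κ κ 𝕜)))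
  rw [conjTranspose_fromRows_eq_fromCols_conjTranspose, fromRows_mul, fromRows_mul_fromCols] at h
  simpa [smul_smul] using h

theorem fromBlocks_sum {α : Type*} [AddCommMonoid α] (s : Finset ν)
    (A : ν → Matrix ι ι α) (B : ν → Matrix ι κ α) (C : ν → Matrix κ ι α) (D : ν → Matrix κ κ α) :
    fromBlocks (∑ i ∈ s, A i) (∑ i ∈ s, B i) (∑ i ∈ s, C i) (∑ i ∈ s, D i) =
      ∑ i ∈ s, fromBlocks (A i) (B i) (C i) (D i) := by
  ext (_ | _) (_ | _) <;> simp [Matrix.sum_apply]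

theorem mul_diagonal_mul_conjTranspose_eq_sum [Fintype ν] [DecidableEq ν] (L : Matrix ι ν 𝕜)
    (c : ν → 𝕜) : L * diagonal c * Lᴴ = ∑ i, c i • (L * single i i (1 : 𝕜) * Lᴴ) := by
  rw [← sum_single_eq_diagonal, Matrix.mul_sum, Matrix.sum_mul]
  refine Finset.sum_congr rfl fun i _ => ?_
  rw [← Matrix.smul_mul, ← Matrix.mul_smul, smul_single, smul_eq_mul, mul_one]

theorem PosDef.exists_congr_diagonal [Fintype ι] [DecidableEq ι] {A C : Matrix ι ι 𝕜}
    (hA : A.PosDef) (hC : C.IsHermitian) :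
    ∃ (L : Matrix ι ι 𝕜) (d : ι → ℝ), IsUnit L ∧ A = L * Lᴴ ∧
      C = L * diagonal (fun i => (d i : 𝕜)) * Lᴴ := by
  open scoped MatrixOrder in
  obtain ⟨R, hRH, hRR, hR⟩ : ∃ R : Matrix ι ι 𝕜, R.IsHermitian ∧ R * R = A ∧ IsUnit R :=
    ⟨CFC.sqrt A, (CFC.sqrt_nonneg A).posSemidef.isHermitian,
      CFC.sqrt_mul_sqrt_self A hA.posSemidef.nonneg,
      (CFC.isUnit_sqrt_iff A hA.posSemidef.nonneg).mpr hA.isUnit⟩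
  have hN : (R⁻¹ * C * R⁻¹).IsHermitian := by
    simpa [hRH.inv.eq] using isHermitian_conjTranspose_mul_mul R⁻¹ hC
  set U : Matrix ι ι 𝕜 := (hN.eigenvectorUnitary : Matrix ι ι 𝕜)
  have hUU : U * Uᴴ = 1 := Unitary.mul_star_self_of_mem hN.eigenvectorUnitary.2
  refine ⟨R * U, hN.eigenvalues, hR.mul Unitary.isUnit_coe, ?_, ?_⟩
  · rw [conjTranspose_mul, hRH.eq, Matrix.mul_assoc, ← Matrix.mul_assoc U, hUU, Matrix.one_mul,
      hRR]
  · have hspec := hN.spectral_theorem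
    rw [Unitary.conjStarAlgAut_apply] at hspec
    have hRdet := (isUnit_iff_isUnit_det R).mp hR
    calc C = R * (R⁻¹ * C * R⁻¹) * R := by
          rw [Matrix.mul_assoc, nonsing_inv_mul_cancel_right R _ hRdet,
            mul_nonsing_inv_cancel_left R C hRdet]
      _ = _ := by
          conv_lhs => rw [hspec]
          rw [conjTranspose_mul, hRH.eq, star_eq_conjTranspose]
          simp only [Matrix.mul_assoc, Function.comp_def, U]

theorem IsUnit.mul_conjTranspose_inv_sandwich [Fintype ι] [DecidableEq ι] {L : Matrix ι ι 𝕜}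
    (hL : IsUnit L) (M N : Matrix ι ι 𝕜) :
    L * M * Lᴴ * (L * Lᴴ)⁻¹ * (L * N * Lᴴ) = L * (M * N) * Lᴴ := by
  have hLdet := (isUnit_iff_isUnit_det L).mp hL
  have hLHdet : IsUnit Lᴴ.det := by rwa [det_conjTranspose, isUnit_star]
  rw [mul_inv_rev]
  simp only [Matrix.mul_assoc, nonsing_inv_mul_cancel_left _ _ hLdet,
    mul_nonsing_inv_cancel_left _ _ hLHdet]

theorem posSemidef_fromBlocks_map_congr_diagonal [Fintype ι] [Fintype κ] [Fintype ν] [DecidableEq ι]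
    [DecidableEq ν] {Φ : Matrix ι ι 𝕜 →ₗ[𝕜] Matrix κ κ 𝕜}
    (hΦ : ∀ A, A.PosDef → (Φ A).PosDef) (L : Matrix ι ν 𝕜) (d : ν → ℝ) :
    (fromBlocks (Φ (L * Lᴴ)) (Φ (L * diagonal (fun i => (d i : 𝕜)) * Lᴴ))
      (Φ (L * diagonal (fun i => (d i : 𝕜)) * Lᴴ))
      (Φ (L * diagonal (fun i => (d i : 𝕜)) ^ 2 * Lᴴ))).PosSemidef := by
  set P : ν → Matrix κ κ 𝕜 := fun i => Φ (L * single i i (1 : 𝕜) * Lᴴ)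
  have hP (i : ν) : (P i).PosSemidef := by
    refine .map_of_map_posDef hΦ (PosSemidef.mul_mul_conjTranspose_same ?_ L)
    rw [← diagonal_single]
    exact .diagonal (Pi.single_nonneg.mpr zero_le_one)
  have hΦP (c : ν → ℝ) : Φ (L * diagonal (fun i => (c i : 𝕜)) * Lᴴ) = ∑ i, c i • P i := by
    rw [mul_diagonal_mul_conjTranspose_eq_sum, map_sum]
    simp only [map_smul, P, RCLike.real_smul_eq_coe_smul (K := 𝕜)]
  have hΦ1 : Φ (L * Lᴴ) = ∑ i, P i := by simpa using hΦP 1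
  have hsq : diagonal (fun i => (d i : 𝕜)) ^ 2 = diagonal (fun i => ((d i * d i : ℝ) : 𝕜)) := by
    simp [sq]
  rw [hΦ1, hsq, hΦP, hΦP, fromBlocks_sum]
  exact posSemidef_sum _ fun i _ => by simpa using (hP i).fromBlocks_smul (d i)

theorem posSemidef_map_mul_inv_mul_sub [Fintype ι] [Fintype κ] [DecidableEq ι] [DecidableEq κ]
    {Φ : Matrix ι ι 𝕜 →ₗ[𝕜] Matrix κ κ 𝕜} (hΦ : ∀ A, A.PosDef → (Φ A).PosDef)
    {A C : Matrix ι ι 𝕜} (hA : A.PosDef) (hC : C.IsHermitian) :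
    (Φ (C * A⁻¹ * C) - Φ C * (Φ A)⁻¹ * Φ C).PosSemidef := by
  obtain ⟨L, d, hL, rfl, rfl⟩ := hA.exists_congr_diagonal hC
  have hblock := posSemidef_fromBlocks_map_congr_diagonal hΦ L d
  have hB := (isHermitian_fromBlocks_iff.mp hblock.isHermitian).2.1
  have hΦA := hΦ _ hA
  have := hΦA.isUnit.invertible
  rw [hL.mul_conjTranspose_inv_sandwich, ← sq]
  have hSchur := (PosDef.fromBlocks₁₁ _ _ hΦA).mp (by rwa [hB])
  rwa [hB] at hSchur

theorem IsHermitian.posSemidef_inv_sub_iff [Fintype ι] [DecidableEq ι] {S K : Matrix ι ι 𝕜}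
    (hS : S.IsHermitian) (hSu : IsUnit S) :
    (S⁻¹ - K).PosSemidef ↔ (S - S * K * S).PosSemidef := by
  have hSdet := (isUnit_iff_isUnit_det S).mp hSu
  rw [← hSu.posSemidef_star_left_conjugate_iff, star_eq_conjTranspose, hS.eq, Matrix.mul_sub,
    Matrix.sub_mul, mul_nonsing_inv S hSdet, Matrix.one_mul]

theorem posSemidef_map_inv_inv_add_sub [Fintype ι] [Fintype κ] [DecidableEq ι] [DecidableEq κ]
    {Φ : Matrix ι ι 𝕜 →ₗ[𝕜] Matrix κ κ 𝕜} (hΦ : ∀ A, A.PosDef → (Φ A).PosDef)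
    {X Y : Matrix ι ι 𝕜} (hX : X.PosDef) (hY : Y.PosDef) :
    ((Φ (X + Y)⁻¹)⁻¹ - ((Φ X⁻¹)⁻¹ + (Φ Y⁻¹)⁻¹)).PosSemidef := by
  set C := (X + Y)⁻¹
  have hC : C.PosDef := (hX.add hY).inv
  have key {Z : Matrix ι ι 𝕜} (hZ : Z.PosDef) :
      (Φ (C * Z * C) - Φ C * (Φ Z⁻¹)⁻¹ * Φ C).PosSemidef := by
    have h := posSemidef_map_mul_inv_mul_sub hΦ hZ.inv hC.isHermitian
    rwa [nonsing_inv_nonsing_inv Z ((isUnit_iff_isUnit_det Z).mp hZ.isUnit)] at h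
  have hsplit : Φ (C * X * C) + Φ (C * Y * C) = Φ C := by
    rw [← map_add, ← Matrix.add_mul, ← Matrix.mul_add,
      nonsing_inv_mul _ ((isUnit_iff_isUnit_det _).mp (hX.add hY).isUnit), Matrix.one_mul]
  have hΦC := hΦ C hC
  rw [hΦC.isHermitian.posSemidef_inv_sub_iff hΦC.isUnit, Matrix.mul_add, Matrix.add_mul]
  have hsum := (key hX).add (key hY)
  rwa [sub_add_sub_comm, hsplit] at hsum

theorem map_inv_inv_smul [Fintype ι] [Fintype κ] [DecidableEq ι] [DecidableEq κ]
    (Φ : Matrix ι ι 𝕜 →ₗ[𝕜] Matrix κ κ 𝕜) (X : Matrix ι ι 𝕜) {c : 𝕜} (hc : c ≠ 0) :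
    (Φ (c • X)⁻¹)⁻¹ = c • (Φ X⁻¹)⁻¹ := by
  rw [inv_smul_of_ne_zero X hc, map_smul, inv_smul_of_ne_zero _ (inv_ne_zero hc), inv_inv]

end Matrix

/-- Concavity of `X ↦ Φ(X⁻¹)⁻¹` for a strictly positive linear map `Φ`. -/
theorem posMap_inv_inv_concave {m n : ℕ}
    (Φ : Matrix (Fin m) (Fin m) ℂ →ₗ[ℂ] Matrix (Fin n) (Fin n) ℂ)
    (hΦ : ∀ A : Matrix (Fin m) (Fin m) ℂ, A.PosDef → (Φ A).PosDef)
    (X Y : Matrix (Fin m) (Fin m) ℂ) (hX : X.PosDef) (hY : Y.PosDef)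
    (t : ℝ) (ht0 : 0 ≤ t) (ht1 : t ≤ 1) :
    ((Φ ((t • X + (1 - t) • Y)⁻¹))⁻¹ -
      (t • (Φ X⁻¹)⁻¹ + (1 - t) • (Φ Y⁻¹)⁻¹)).PosSemidef := by
  rcases ht0.eq_or_lt with rfl | ht0
  · simpa using PosSemidef.zero
  rcases ht1.eq_or_lt with rfl | ht1
  · simpa using PosSemidef.zero
  have ht1' : 0 < 1 - t := sub_pos.mpr ht1
  have hsmul (s : ℝ) (hs : s ≠ 0) (Z : Matrix (Fin m) (Fin m) ℂ) :
      (Φ (s • Z)⁻¹)⁻¹ = s • (Φ Z⁻¹)⁻¹ := by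
    simp only [RCLike.real_smul_eq_coe_smul (K := ℂ)]
    exact map_inv_inv_smul Φ Z (Complex.ofReal_ne_zero.mpr hs)
  rw [← hsmul t ht0.ne', ← hsmul (1 - t) ht1'.ne']
  exact posSemidef_map_inv_inv_add_sub hΦ (hX.smul ht0) (hY.smul ht1')
end

section
/- Let λ, μ ≥ 0, f₁(x)=1/(λ+x), f₂(x)=1/(μ+x). Let Φ : Mₘ(ℂ) → Mₖ(ℂ) and Ψ : Mₙ(ℂ) → Mₖ(ℂ) be positive linear maps. Then the map (X,Y) ↦ Tr(Φ(f₁(X))^{1/2} Ψ(f₂(Y)) Φ(f₁(X))^{1/2}) is jointly convex on pairs of positive definite matrices, i.e., for positive definite X₁,X₂ ∈ Mₘ(ℂ), Y₁,Y₂ ∈ Mₙ(ℂ), t ∈ [0,1], applying the map to (tX₁+(1−t)X₂, tY₁+(1−t)Y₂) yields a value at most t times its value at (X₁,Y₁) plus (1−t) times its value at (X₂,Y₂). -/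
/-!
Since `Tr(P^{1/2} Q P^{1/2}) = Tr(P Q)`, the function is `F(A, B) = Re Tr(Φ(A⁻¹) Ψ(B⁻¹))` evaluated
at `A = λ + X`, `B = μ + Y`, so it suffices that `F` is jointly convex on pairs of positive definite
matrices. The key is the tangent inequality
`3 F(A₀, B₀) ≤ F(A, B) + Re Tr(Φ(A₀⁻¹ A A₀⁻¹) Ψ(B₀⁻¹)) + Re Tr(Φ(A₀⁻¹) Ψ(B₀⁻¹ B B₀⁻¹))`.
Conjugating by `A₀^{-1/2}` and `B₀^{-1/2}` keeps `Φ` and `Ψ` positive and reduces it to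
`A₀ = B₀ = 1`; expanding `A` and `B` in their eigenprojections `Pᵢ`, `Qⱼ` then reduces it to the
scalar AM-GM inequality `u⁻¹ v⁻¹ + u + v ≥ 3`, weighted by the numbers `Re Tr(Φ(Pᵢ) Ψ(Qⱼ)) ≥ 0`.
At `A₀ = t A₁ + (1 - t) A₂`, `B₀ = t B₁ + (1 - t) B₂` the last two terms of the tangent inequality
are linear in `A` resp. `B` and average back to `F(A₀, B₀)` because `A₀⁻¹ = A₀⁻¹ A₀ A₀⁻¹`, so
averaging the tangent inequalities at `(A₁, B₁)` and `(A₂, B₂)` gives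
`3 F(A₀, B₀) ≤ t F(A₁, B₁) + (1 - t) F(A₂, B₂) + 2 F(A₀, B₀)`.
-/

open Matrix ComplexOrder

lemma three_le_inv_mul_inv_add_add {u v : ℝ} (hu : 0 < u) (hv : 0 < v) :
    3 ≤ u⁻¹ * v⁻¹ + u + v := by
  have hpoly : 3 * (u * v) ≤ 1 + u ^ 2 * v + u * v ^ 2 := by
    nlinarith [mul_pos hu hv, sq_nonneg (u - v), sq_nonneg (u - 1), sq_nonneg (v - 1),
      sq_nonneg (u * v - 1), mul_pos (mul_pos hu hv) hu]
  have hdiff : u⁻¹ * v⁻¹ + u + v - 3 = (1 + u ^ 2 * v + u * v ^ 2 - 3 * (u * v)) / (u * v) := by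
    field_simp
  rw [← sub_nonneg, hdiff]
  exact div_nonneg (by linarith) (mul_pos hu hv).le

lemma add_smul_add_one_sub_smul {E : Type*} [AddCommGroup E] [Module ℝ E] (w x y : E) (t : ℝ) :
    w + (t • x + (1 - t) • y) = t • (w + x) + (1 - t) • (w + y) := by
  module

namespace Matrix

section RCLike

variable {n 𝕜 : Type*} [RCLike 𝕜]

lemma convex_setOf_posDef : Convex ℝ {A : Matrix n n 𝕜 | A.PosDef} := by
  intro A hA B hB a b ha hb hab
  rcases ha.lt_or_eq with ha | rfl
  · exact (hA.smul ha).add_posSemidef (hB.posSemidef.smul hb)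
  · obtain rfl : b = 1 := by simpa using hab
    simpa using hB

variable [Fintype n] {A : Matrix n n 𝕜}

lemma PosSemidef.mul_mul_same_of_isHermitian {S : Matrix n n 𝕜} (hA : A.PosSemidef)
    (hS : S.IsHermitian) : (S * A * S).PosSemidef := by
  simpa [hS.eq] using hA.conjTranspose_mul_mul_same S

variable [DecidableEq n]

noncomputable def IsHermitian.eigenproj (hA : A.IsHermitian) (i : n) : Matrix n n 𝕜 :=
  Unitary.conjStarAlgAut 𝕜 _ hA.eigenvectorUnitary (single i i 1)

lemma IsHermitian.posSemidef_eigenproj (hA : A.IsHermitian) (i : n) :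
    (hA.eigenproj i).PosSemidef := by
  rw [eigenproj, Unitary.conjStarAlgAut_apply, star_eq_conjTranspose, ← diagonal_single]
  refine PosSemidef.mul_mul_conjTranspose_same (posSemidef_diagonal_iff.mpr fun j ↦ ?_) _
  rcases eq_or_ne j i with rfl | h <;> simp [*]

lemma IsHermitian.cfc_eq_sum_smul_eigenproj (hA : A.IsHermitian) (f : ℝ → ℝ) :
    cfc f A = ∑ i, f (hA.eigenvalues i) • hA.eigenproj i := by
  simp only [hA.cfc_eq, IsHermitian.cfc, eigenproj, RCLike.real_smul_eq_coe_smul (K := 𝕜),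
    ← map_smul, ← map_sum, smul_single, smul_eq_mul, mul_one, sum_single_eq_diagonal]
  rfl

lemma PosDef.inv_eq_cfc_inv (hA : A.PosDef) : A⁻¹ = cfc (·⁻¹ : ℝ → ℝ) A := by
  rw [nonsing_inv_eq_ringInverse]
  exact (cfc_ringInverse_id A hA.isUnit hA.isHermitian).symm

open scoped MatrixOrder in
lemma PosDef.exists_posDef_mul_self_eq (hA : A.PosDef) :
    ∃ S : Matrix n n 𝕜, S.PosDef ∧ S * S = A :=
  ⟨CFC.sqrt A, isStrictlyPositive_iff_posDef.mp (isStrictlyPositive_iff_posDef.mpr hA).sqrt,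
    CFC.sqrt_mul_sqrt_self A hA.posSemidef.nonneg⟩

open scoped MatrixOrder in
lemma PosSemidef.cfc_sqrt_mul_self (hA : A.PosSemidef) :
    cfc Real.sqrt A * cfc Real.sqrt A = A := by
  rw [← cfcₙ_eq_cfc, ← CFC.sqrt_eq_real_sqrt A hA.nonneg, CFC.sqrt_mul_sqrt_self A hA.nonneg]

lemma PosSemidef.trace_cfc_sqrt_mul_mul_cfc_sqrt (hA : A.PosSemidef) (B : Matrix n n 𝕜) :
    trace (cfc Real.sqrt A * B * cfc Real.sqrt A) = trace (A * B) := by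
  rw [trace_mul_cycle, hA.cfc_sqrt_mul_self]

lemma PosSemidef.trace_mul_nonneg {B : Matrix n n 𝕜} (hA : A.PosSemidef) (hB : B.PosSemidef) :
    0 ≤ trace (A * B) := by
  have hsqrt : (cfc Real.sqrt A)ᴴ = cfc Real.sqrt A := cfc_predicate Real.sqrt A
  rw [← hA.trace_cfc_sqrt_mul_mul_cfc_sqrt]
  simpa only [hsqrt] using (hB.conjTranspose_mul_mul_same (cfc Real.sqrt A)).trace_nonneg

lemma PosDef.mul_mul_same_of_posDef {S : Matrix n n 𝕜} (hA : A.PosDef) (hS : S.PosDef) :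
    (S * A * S).PosDef := by
  simpa [hS.isHermitian.eq] using
    hA.conjTranspose_mul_mul_same (mulVec_injective_iff_isUnit.mpr hS.isUnit)

lemma mul_mul_inv_mul_mul_self {S : Matrix n n 𝕜} (hS : IsUnit S) :
    S * (S * A * S)⁻¹ * S = A⁻¹ := by
  have hdet := (isUnit_iff_isUnit_det S).mp hS
  simp only [mul_inv_rev, ← mul_assoc, mul_nonsing_inv _ hdet, one_mul,
    nonsing_inv_mul_cancel_right _ _ hdet]

lemma inv_eq_smul_inv_mul_mul_inv_add_smul {C A₁ A₂ : Matrix n n 𝕜} {a b : ℝ}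
    (hC : C = a • A₁ + b • A₂) (hu : IsUnit C) :
    C⁻¹ = a • (C⁻¹ * A₁ * C⁻¹) + b • (C⁻¹ * A₂ * C⁻¹) :=
  calc C⁻¹ = C⁻¹ * C * C⁻¹ := by rw [nonsing_inv_mul C ((isUnit_iff_isUnit_det C).mp hu), one_mul]
    _ = C⁻¹ * (a • A₁ + b • A₂) * C⁻¹ := by rw [← hC]
    _ = _ := by simp only [mul_add, add_mul, mul_smul_comm, smul_mul_assoc]

end RCLike

lemma PosDef.ofReal_smul_one_add {n : Type*} [Fintype n] [DecidableEq n] {c : ℝ} (hc : 0 ≤ c)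
    {Z : Matrix n n ℂ} (hZ : Z.PosDef) : ((c : ℂ) • 1 + Z).PosDef :=
  PosDef.posSemidef_add (PosSemidef.one.smul (Complex.zero_le_real.mpr hc)) hZ

section ReTraceForm

variable {m n k : Type*} [Fintype k] (Φ : Matrix m m ℂ →ₗ[ℂ] Matrix k k ℂ)
  (Ψ : Matrix n n ℂ →ₗ[ℂ] Matrix k k ℂ)

noncomputable def reTraceForm : Matrix m m ℂ →ₗ[ℝ] Matrix n n ℂ →ₗ[ℝ] ℝ :=
  LinearMap.mk₂ ℝ (fun P Q ↦ (trace (Φ P * Ψ Q)).re)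
    (fun P P' Q ↦ by simp only [map_add, add_mul, trace_add, Complex.add_re])
    (fun c P Q ↦ by
      simp only [LinearMap.map_smul_of_tower, smul_mul_assoc, trace_smul, Complex.smul_re])
    (fun P Q Q' ↦ by simp only [map_add, mul_add, trace_add, Complex.add_re])
    (fun c P Q ↦ by
      simp only [LinearMap.map_smul_of_tower, mul_smul_comm, trace_smul, Complex.smul_re])

lemma reTraceForm_apply (P : Matrix m m ℂ) (Q : Matrix n n ℂ) :
    reTraceForm Φ Ψ P Q = (trace (Φ P * Ψ Q)).re :=
  rfl

variable {Φ Ψ}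

lemma reTraceForm_nonneg [DecidableEq k]
    (hΦ : ∀ A : Matrix m m ℂ, A.PosSemidef → (Φ A).PosSemidef)
    (hΨ : ∀ A : Matrix n n ℂ, A.PosSemidef → (Ψ A).PosSemidef)
    {P : Matrix m m ℂ} {Q : Matrix n n ℂ} (hP : P.PosSemidef) (hQ : Q.PosSemidef) :
    0 ≤ reTraceForm Φ Ψ P Q :=
  (Complex.nonneg_iff.mp ((hΦ P hP).trace_mul_nonneg (hΨ Q hQ))).1

variable [Fintype m] [DecidableEq m] [Fintype n] [DecidableEq n]

lemma reTraceForm_cfc_cfc {U : Matrix m m ℂ} {V : Matrix n n ℂ} (hU : U.IsHermitian)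
    (hV : V.IsHermitian) (f g : ℝ → ℝ) :
    reTraceForm Φ Ψ (cfc f U) (cfc g V) = ∑ i, ∑ j, f (hU.eigenvalues i) *
      g (hV.eigenvalues j) * reTraceForm Φ Ψ (hU.eigenproj i) (hV.eigenproj j) := by
  simp only [hU.cfc_eq_sum_smul_eigenproj, hV.cfc_eq_sum_smul_eigenproj, map_sum, map_smul,
    LinearMap.sum_apply, LinearMap.smul_apply, smul_eq_mul, Finset.mul_sum, mul_assoc]
  rw [Finset.sum_comm]
  simp only [mul_left_comm]

variable [DecidableEq k]

lemma three_mul_reTraceForm_one_one_le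
    (hΦ : ∀ A : Matrix m m ℂ, A.PosSemidef → (Φ A).PosSemidef)
    (hΨ : ∀ A : Matrix n n ℂ, A.PosSemidef → (Ψ A).PosSemidef)
    {U : Matrix m m ℂ} {V : Matrix n n ℂ} (hU : U.PosDef) (hV : V.PosDef) :
    3 * reTraceForm Φ Ψ 1 1 ≤
      reTraceForm Φ Ψ U⁻¹ V⁻¹ + reTraceForm Φ Ψ U 1 + reTraceForm Φ Ψ 1 V := by
  have hUsa : IsSelfAdjoint U := hU.1
  have hVsa : IsSelfAdjoint V := hV.1
  have hone := reTraceForm_cfc_cfc (Φ := Φ) (Ψ := Ψ) hU.1 hV.1 (fun _ ↦ 1) (fun _ ↦ 1)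
  have hinv := reTraceForm_cfc_cfc (Φ := Φ) (Ψ := Ψ) hU.1 hV.1 (·⁻¹) (·⁻¹)
  have hleft := reTraceForm_cfc_cfc (Φ := Φ) (Ψ := Ψ) hU.1 hV.1 id (fun _ ↦ 1)
  have hright := reTraceForm_cfc_cfc (Φ := Φ) (Ψ := Ψ) hU.1 hV.1 (fun _ ↦ 1) id
  rw [cfc_const_one ℝ U, cfc_const_one ℝ V] at hone
  rw [← hU.inv_eq_cfc_inv, ← hV.inv_eq_cfc_inv] at hinv
  rw [cfc_id ℝ U, cfc_const_one ℝ V] at hleft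
  rw [cfc_const_one ℝ U, cfc_id ℝ V] at hright
  rw [hone, hinv, hleft, hright]
  simp only [Finset.mul_sum, ← Finset.sum_add_distrib]
  gcongr with i _ j _
  have hγ := reTraceForm_nonneg hΦ hΨ (hU.1.posSemidef_eigenproj i) (hV.1.posSemidef_eigenproj j)
  have hamgm := three_le_inv_mul_inv_add_add (hU.eigenvalues_pos i) (hV.eigenvalues_pos j)
  simp only [id]
  nlinarith

lemma three_mul_reTraceForm_inv_inv_le
    (hΦ : ∀ A : Matrix m m ℂ, A.PosSemidef → (Φ A).PosSemidef)
    (hΨ : ∀ A : Matrix n n ℂ, A.PosSemidef → (Ψ A).PosSemidef)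
    {A A₀ : Matrix m m ℂ} {B B₀ : Matrix n n ℂ} (hA : A.PosDef) (hA₀ : A₀.PosDef)
    (hB : B.PosDef) (hB₀ : B₀.PosDef) :
    3 * reTraceForm Φ Ψ A₀⁻¹ B₀⁻¹ ≤
      reTraceForm Φ Ψ A⁻¹ B⁻¹ + reTraceForm Φ Ψ (A₀⁻¹ * A * A₀⁻¹) B₀⁻¹ +
        reTraceForm Φ Ψ A₀⁻¹ (B₀⁻¹ * B * B₀⁻¹) := by
  obtain ⟨S, hS, hSS⟩ := hA₀.inv.exists_posDef_mul_self_eq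
  obtain ⟨T, hT, hTT⟩ := hB₀.inv.exists_posDef_mul_self_eq
  have key := three_mul_reTraceForm_one_one_le
    (Φ := Φ ∘ₗ LinearMap.mulLeftRight ℂ (S, S)) (Ψ := Ψ ∘ₗ LinearMap.mulLeftRight ℂ (T, T))
    (fun P hP ↦ hΦ _ (hP.mul_mul_same_of_isHermitian hS.1))
    (fun Q hQ ↦ hΨ _ (hQ.mul_mul_same_of_isHermitian hT.1))
    (hA.mul_mul_same_of_posDef hS) (hB.mul_mul_same_of_posDef hT)
  simp only [reTraceForm_apply, LinearMap.comp_apply, LinearMap.mulLeftRight_apply, mul_one,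
    mul_mul_inv_mul_mul_self hS.isUnit, mul_mul_inv_mul_mul_self hT.isUnit] at key
  simpa only [reTraceForm_apply, ← hSS, ← hTT, mul_assoc] using key

theorem convexOn_reTraceForm_inv_inv
    (hΦ : ∀ A : Matrix m m ℂ, A.PosSemidef → (Φ A).PosSemidef)
    (hΨ : ∀ A : Matrix n n ℂ, A.PosSemidef → (Ψ A).PosSemidef) :
    ConvexOn ℝ ({A : Matrix m m ℂ | A.PosDef} ×ˢ {B : Matrix n n ℂ | B.PosDef})
      fun p ↦ reTraceForm Φ Ψ p.1⁻¹ p.2⁻¹ := by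
  refine ⟨convex_setOf_posDef.prod convex_setOf_posDef, ?_⟩
  rintro ⟨A₁, B₁⟩ ⟨hA₁ : A₁.PosDef, hB₁ : B₁.PosDef⟩ ⟨A₂, B₂⟩ ⟨hA₂ : A₂.PosDef, hB₂ : B₂.PosDef⟩
    a b ha hb hab
  simp only [Prod.smul_mk, Prod.mk_add_mk, smul_eq_mul]
  set A := a • A₁ + b • A₂ with hA_def
  set B := a • B₁ + b • B₂ with hB_def
  have hA : A.PosDef := convex_setOf_posDef hA₁ hA₂ ha hb hab
  have hB : B.PosDef := convex_setOf_posDef hB₁ hB₂ ha hb hab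
  have hsplitA : reTraceForm Φ Ψ A⁻¹ B⁻¹ =
      a * reTraceForm Φ Ψ (A⁻¹ * A₁ * A⁻¹) B⁻¹ + b * reTraceForm Φ Ψ (A⁻¹ * A₂ * A⁻¹) B⁻¹ := by
    conv_lhs => rw [inv_eq_smul_inv_mul_mul_inv_add_smul hA_def hA.isUnit]
    simp only [map_add, map_smul, LinearMap.add_apply, LinearMap.smul_apply, smul_eq_mul]
  have hsplitB : reTraceForm Φ Ψ A⁻¹ B⁻¹ =
      a * reTraceForm Φ Ψ A⁻¹ (B⁻¹ * B₁ * B⁻¹) + b * reTraceForm Φ Ψ A⁻¹ (B⁻¹ * B₂ * B⁻¹) := by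
    conv_lhs => rw [inv_eq_smul_inv_mul_mul_inv_add_smul hB_def hB.isUnit]
    simp only [map_add, map_smul, smul_eq_mul]
  have h₁ := mul_le_mul_of_nonneg_left (three_mul_reTraceForm_inv_inv_le hΦ hΨ hA₁ hA hB₁ hB) ha
  have h₂ := mul_le_mul_of_nonneg_left (three_mul_reTraceForm_inv_inv_le hΦ hΨ hA₂ hA hB₂ hB) hb
  have hcombo : reTraceForm Φ Ψ A⁻¹ B⁻¹ =
      a * reTraceForm Φ Ψ A⁻¹ B⁻¹ + b * reTraceForm Φ Ψ A⁻¹ B⁻¹ := by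
    rw [← add_mul, hab, one_mul]
  linarith

end ReTraceForm

end Matrix

/-- Joint convexity of
`(X,Y) ↦ Tr(Φ((λ+X)⁻¹)^{1/2} Ψ((μ+Y)⁻¹) Φ((λ+X)⁻¹)^{1/2})`
for positive linear maps `Φ`, `Ψ` and `λ, μ ≥ 0`. -/
theorem trace_jointly_convex {m n k : ℕ} (l μ : ℝ) (hl : 0 ≤ l) (hμ : 0 ≤ μ)
    (Φ : Matrix (Fin m) (Fin m) ℂ →ₗ[ℂ] Matrix (Fin k) (Fin k) ℂ)
    (Ψ : Matrix (Fin n) (Fin n) ℂ →ₗ[ℂ] Matrix (Fin k) (Fin k) ℂ)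
    (hΦ : ∀ A : Matrix (Fin m) (Fin m) ℂ, A.PosSemidef → (Φ A).PosSemidef)
    (hΨ : ∀ A : Matrix (Fin n) (Fin n) ℂ, A.PosSemidef → (Ψ A).PosSemidef)
    (X₁ X₂ : Matrix (Fin m) (Fin m) ℂ) (hX₁ : X₁.PosDef) (hX₂ : X₂.PosDef)
    (Y₁ Y₂ : Matrix (Fin n) (Fin n) ℂ) (hY₁ : Y₁.PosDef) (hY₂ : Y₂.PosDef)
    (t : ℝ) (ht0 : 0 ≤ t) (ht1 : t ≤ 1) :
    ((cfc Real.sqrt (Φ (((l : ℂ) • 1 + (t • X₁ + (1 - t) • X₂))⁻¹)) *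
        Ψ (((μ : ℂ) • 1 + (t • Y₁ + (1 - t) • Y₂))⁻¹) *
        cfc Real.sqrt (Φ (((l : ℂ) • 1 + (t • X₁ + (1 - t) • X₂))⁻¹))).trace).re ≤
      t * ((cfc Real.sqrt (Φ (((l : ℂ) • 1 + X₁)⁻¹)) * Ψ (((μ : ℂ) • 1 + Y₁)⁻¹) *
            cfc Real.sqrt (Φ (((l : ℂ) • 1 + X₁)⁻¹))).trace).re +
      (1 - t) * ((cfc Real.sqrt (Φ (((l : ℂ) • 1 + X₂)⁻¹)) * Ψ (((μ : ℂ) • 1 + Y₂)⁻¹) *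
            cfc Real.sqrt (Φ (((l : ℂ) • 1 + X₂)⁻¹))).trace).re := by
  have hA₁ := PosDef.ofReal_smul_one_add hl hX₁
  have hA₂ := PosDef.ofReal_smul_one_add hl hX₂
  have hB₁ := PosDef.ofReal_smul_one_add hμ hY₁
  have hB₂ := PosDef.ofReal_smul_one_add hμ hY₂
  have hAt := convex_setOf_posDef hA₁ hA₂ ht0 (sub_nonneg.2 ht1) (add_sub_cancel t 1)
  have hconvex := (convexOn_reTraceForm_inv_inv hΦ hΨ).2 (Set.mk_mem_prod hA₁ hB₁)
    (Set.mk_mem_prod hA₂ hB₂) ht0 (sub_nonneg.2 ht1) (add_sub_cancel t 1)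
  have hsqrt {A : Matrix (Fin m) (Fin m) ℂ} (hA : A.PosDef) (Q : Matrix (Fin k) (Fin k) ℂ) :=
    (hΦ _ hA.inv.posSemidef).trace_cfc_sqrt_mul_mul_cfc_sqrt Q
  rw [add_smul_add_one_sub_smul, add_smul_add_one_sub_smul, hsqrt hA₁, hsqrt hA₂, hsqrt hAt]
  simpa only [reTraceForm_apply, Prod.smul_mk, Prod.mk_add_mk, smul_eq_mul] using hconvex
end

section
/- Strong convexity of X ↦ Φ((λ+X)⁻¹) with respect to the harmonic mean: for a strictly positive linear map Φ between matrix algebras, λ ≥ 0, and positive definite X, Y, Φ((λ + (X+Y)/2)⁻¹) ≤ Φ((λ+X)⁻¹) ! Φ((λ+Y)⁻¹), where A ! B = ((A⁻¹+B⁻¹)/2)⁻¹. -/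
/-!
With `C = λ + X` and `D = λ + Y` we have `λ + (X+Y)/2 = (C+D)/2`, so after scaling by `2` this is
the parallel-sum inequality `Φ((A⁻¹+B⁻¹)⁻¹) ≤ (Φ(A)⁻¹+Φ(B)⁻¹)⁻¹` for `A = C⁻¹`, `B = D⁻¹`.
With `X₀ = (A⁻¹+B⁻¹)⁻¹` and `M = Φ X₀`, Choi's inequality `Φ Z (Φ W)⁻¹ Φ Z ≤ Φ (Z W⁻¹ Z)` for
`Z = X₀` and `W = A, B` sums to `M (Φ(A)⁻¹+Φ(B)⁻¹) M ≤ Φ(X₀ (A⁻¹+B⁻¹) X₀) = M`, whence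
`M ≤ (Φ(A)⁻¹+Φ(B)⁻¹)⁻¹`.

Choi's inequality holds for merely positive `Φ`: diagonalizing `W` and `Z` simultaneously by a
congruence `R`, the block matrix `[[Φ W, Φ Z], [Φ Z, Φ (Z W⁻¹ Z)]]` is a sum over the columns `r`
of `R` of `[[1, μ], [μ, μ²]] ⊗ Φ(r rᴴ)`, which is positive semidefinite; its Schur complement is
the difference in question.
-/

open Matrix ComplexOrder

namespace Matrix

open Filter Topology
open scoped MatrixOrder Matrix.Norms.L2Operator

variable {m n : Type*} [Fintype n] [DecidableEq n]

theorem PosSemidef.map_of_map_posDef_s18 [DecidableEq m] (Φ : Matrix m m ℂ →ₗ[ℂ] Matrix n n ℂ)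
    (hΦ : ∀ A, A.PosDef → (Φ A).PosDef) {A : Matrix m m ℂ} (hA : A.PosSemidef) :
    (Φ A).PosSemidef := by
  have hlim : Tendsto (fun t : ℝ => Φ (A + t • 1)) (𝓝[>] 0) (𝓝 (Φ A)) := by
    have : Continuous (fun t : ℝ => Φ (A + t • 1)) := by
      simp only [map_add, LinearMap.map_smul_of_tower]
      fun_prop
    simpa using (this.tendsto 0).mono_left nhdsWithin_le_nhds
  refine nonneg_iff_posSemidef.mp (ge_of_tendsto hlim ?_)
  filter_upwards [self_mem_nhdsWithin] with t (ht : 0 < t)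
  exact (hΦ _ (PosDef.posSemidef_add hA (PosDef.one.smul ht))).posSemidef.nonneg

theorem posSemidef_fromBlocks_smul {K : Matrix n n ℂ} (hK : K.PosSemidef) (μ : ℝ) :
    (fromBlocks K ((μ : ℂ) • K) ((μ : ℂ) • K) ((μ : ℂ) ^ 2 • K)).PosSemidef := by
  have h := hK.conjTranspose_mul_mul_same (fromCols (1 : Matrix n n ℂ) ((μ : ℂ) • (1 : Matrix n n ℂ)))
  rw [Matrix.mul_assoc, mul_fromCols, conjTranspose_fromCols_eq_fromRows_conjTranspose,
    fromRows_mul_fromCols] at h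
  simpa only [conjTranspose_smul, conjTranspose_one, Complex.star_def, Complex.conj_ofReal,
    smul_mul_assoc, Matrix.mul_smul, Matrix.one_mul, Matrix.mul_one, smul_smul, sq] using h

theorem mul_diagonal_mul_conjTranspose_eq_sum_s18 [Fintype m] [DecidableEq m] (R : Matrix m m ℂ) (d : m → ℂ) :
    R * diagonal d * Rᴴ = ∑ i, d i • vecMulVec (fun k => R k i) (star fun k => R k i) := by
  ext k l
  rw [mul_apply]
  simp only [mul_diagonal, conjTranspose_apply, sum_apply, smul_apply, vecMulVec_apply,
    Pi.star_apply, smul_eq_mul]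
  exact Finset.sum_congr rfl fun j _ => by ring

theorem posSemidef_fromBlocks_map_conj_diagonal [Fintype m] [DecidableEq m]
    (Φ : Matrix m m ℂ →ₗ[ℂ] Matrix n n ℂ) (hΦ : ∀ A, A.PosSemidef → (Φ A).PosSemidef)
    (R : Matrix m m ℂ) (μ : m → ℝ) :
    (fromBlocks (Φ (R * Rᴴ)) (Φ (R * diagonal (fun i => (μ i : ℂ)) * Rᴴ))
      (Φ (R * diagonal (fun i => (μ i : ℂ)) * Rᴴ))
      (Φ (R * diagonal (fun i => (μ i : ℂ) ^ 2) * Rᴴ))).PosSemidef := by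
  set K : m → Matrix n n ℂ := fun i => Φ (vecMulVec (fun k => R k i) (star fun k => R k i))
  have hΦR : ∀ d, Φ (R * diagonal d * Rᴴ) = ∑ i, d i • K i := fun d => by
    simp [mul_diagonal_mul_conjTranspose_eq_sum_s18, K]
  have hblocks : fromBlocks (Φ (R * Rᴴ)) (Φ (R * diagonal (fun i => (μ i : ℂ)) * Rᴴ))
      (Φ (R * diagonal (fun i => (μ i : ℂ)) * Rᴴ))
      (Φ (R * diagonal (fun i => (μ i : ℂ) ^ 2) * Rᴴ)) =
      ∑ i, fromBlocks (K i) ((μ i : ℂ) • K i) ((μ i : ℂ) • K i) ((μ i : ℂ) ^ 2 • K i) := by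
    rw [show R * Rᴴ = R * diagonal 1 * Rᴴ by simp, hΦR, hΦR, hΦR]
    ext (j | j) (k | k) <;> simp [sum_apply]
  rw [hblocks]
  exact posSemidef_sum _ fun i _ =>
    posSemidef_fromBlocks_smul (hΦ _ (posSemidef_vecMulVec_self_star _)) (μ i)

theorem PosDef.exists_conj_diagonal_eq {W Z : Matrix n n ℂ} (hW : W.PosDef) (hZ : Z.IsHermitian) :
    ∃ (R : Matrix n n ℂ) (μ : n → ℝ), R * Rᴴ = W ∧ R * diagonal (fun i => (μ i : ℂ)) * Rᴴ = Z := by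
  obtain ⟨B, hB, rfl⟩ :=
    CStarAlgebra.isStrictlyPositive_iff_eq_mul_star_self.mp hW.isStrictlyPositive
  have hBdet : IsUnit B.det := (isUnit_iff_isUnit_det B).mp hB
  have hBH : IsUnit Bᴴ.det := by simpa [det_conjTranspose] using hBdet.star
  have hH : (B⁻¹ * Z * Bᴴ⁻¹).IsHermitian := by
    simpa [conjTranspose_nonsing_inv] using isHermitian_mul_mul_conjTranspose B⁻¹ hZ
  set U := (hH.eigenvectorUnitary : Matrix n n ℂ)
  have hU : U * star U = 1 := Unitary.coe_mul_star_self hH.eigenvectorUnitary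
  refine ⟨B * U, hH.eigenvalues, ?_, ?_⟩
  · rw [conjTranspose_mul, Matrix.mul_assoc, ← Matrix.mul_assoc U, ← star_eq_conjTranspose, hU,
      Matrix.one_mul, star_eq_conjTranspose]
  · have spec : U * diagonal (fun i => (hH.eigenvalues i : ℂ)) * star U = B⁻¹ * Z * Bᴴ⁻¹ :=
      hH.spectral_theorem.symm
    calc B * U * diagonal (fun i => (hH.eigenvalues i : ℂ)) * (B * U)ᴴ
        = B * (U * diagonal (fun i => (hH.eigenvalues i : ℂ)) * star U) * Bᴴ := by
          simp only [conjTranspose_mul, star_eq_conjTranspose, Matrix.mul_assoc]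
      _ = Z := by
          rw [spec]
          simp only [Matrix.mul_assoc, nonsing_inv_mul _ hBH, Matrix.mul_one,
            mul_nonsing_inv_cancel_left _ _ hBdet]

theorem map_mul_inv_mul_le [Fintype m] [DecidableEq m] (Φ : Matrix m m ℂ →ₗ[ℂ] Matrix n n ℂ)
    (hΦ : ∀ A, A.PosDef → (Φ A).PosDef) {W Z : Matrix m m ℂ} (hW : W.PosDef)
    (hZ : Z.IsHermitian) : Φ Z * (Φ W)⁻¹ * Φ Z ≤ Φ (Z * W⁻¹ * Z) := by
  obtain ⟨R, μ, hRW, hRZ⟩ := hW.exists_conj_diagonal_eq hZ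
  have hR : IsUnit R.det := by
    have hWdet : IsUnit (R * Rᴴ).det := hRW ▸ (isUnit_iff_isUnit_det W).mp hW.isUnit
    exact isUnit_of_mul_isUnit_left (det_mul R Rᴴ ▸ hWdet)
  have hRH : IsUnit Rᴴ.det := by simpa [det_conjTranspose] using hR.star
  have hZWZ : Z * W⁻¹ * Z = R * diagonal (fun i => (μ i : ℂ) ^ 2) * Rᴴ := by
    have hD : diagonal (fun i => (μ i : ℂ) ^ 2) =
        diagonal (fun i => (μ i : ℂ)) * diagonal (fun i => (μ i : ℂ)) := by
      simp [diagonal_mul_diagonal, sq]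
    rw [← hRW, ← hRZ, mul_inv_rev, hD]
    simp only [Matrix.mul_assoc, mul_nonsing_inv_cancel_left _ _ hRH,
      nonsing_inv_mul_cancel_left _ _ hR]
  have hblock := posSemidef_fromBlocks_map_conj_diagonal Φ
    (fun _ hA => hA.map_of_map_posDef_s18 Φ hΦ) R μ
  rw [hRW, hRZ, ← hZWZ] at hblock
  have hΦZ : (Φ Z)ᴴ = Φ Z := (isHermitian_fromBlocks_iff.mp hblock.isHermitian).2.1
  have := (hΦ W hW).isUnit.invertible
  nth_rw 2 [← hΦZ] at hblock
  have hschur := ((hΦ W hW).fromBlocks₁₁ _ _).mp hblock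
  rwa [hΦZ] at hschur

theorem PosDef.le_inv_of_mul_mul_le {M S : Matrix n n ℂ} (hM : M.PosDef) (hS : S.PosDef)
    (h : M * S * M ≤ M) : M ≤ S⁻¹ := by
  have hMdet : IsUnit M.det := (isUnit_iff_isUnit_det M).mp hM.isUnit
  have hSM : S ≤ M⁻¹ := by
    have := star_left_conjugate_le_conjugate h M⁻¹
    rwa [star_eq_conjTranspose, hM.inv.isHermitian.eq, nonsing_inv_mul _ hMdet, Matrix.one_mul,
      ← Matrix.mul_assoc, ← Matrix.mul_assoc, nonsing_inv_mul _ hMdet, Matrix.one_mul,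
      Matrix.mul_assoc, mul_nonsing_inv _ hMdet, Matrix.mul_one] at this
  have hinv := CStarAlgebra.ringInverse_le_ringInverse hSM hS.isStrictlyPositive
  rwa [← nonsing_inv_eq_ringInverse, ← nonsing_inv_eq_ringInverse,
    nonsing_inv_nonsing_inv _ hMdet] at hinv

theorem map_inv_add_inv_inv_le [Fintype m] [DecidableEq m] (Φ : Matrix m m ℂ →ₗ[ℂ] Matrix n n ℂ)
    (hΦ : ∀ A, A.PosDef → (Φ A).PosDef) {A B : Matrix m m ℂ} (hA : A.PosDef) (hB : B.PosDef) :
    Φ (A⁻¹ + B⁻¹)⁻¹ ≤ ((Φ A)⁻¹ + (Φ B)⁻¹)⁻¹ := by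
  have hS : (A⁻¹ + B⁻¹).PosDef := hA.inv.add hB.inv
  have hSdet : IsUnit (A⁻¹ + B⁻¹).det := (isUnit_iff_isUnit_det _).mp hS.isUnit
  set X₀ := (A⁻¹ + B⁻¹)⁻¹
  have hX₀ : X₀ * (A⁻¹ + B⁻¹) * X₀ = X₀ := by
    rw [nonsing_inv_mul _ hSdet, Matrix.one_mul]
  refine (hΦ _ hS.inv).le_inv_of_mul_mul_le ((hΦ A hA).inv.add (hΦ B hB).inv) ?_
  calc Φ X₀ * ((Φ A)⁻¹ + (Φ B)⁻¹) * Φ X₀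
      = Φ X₀ * (Φ A)⁻¹ * Φ X₀ + Φ X₀ * (Φ B)⁻¹ * Φ X₀ := by
        rw [Matrix.mul_add, Matrix.add_mul]
    _ ≤ Φ (X₀ * A⁻¹ * X₀) + Φ (X₀ * B⁻¹ * X₀) :=
        add_le_add (map_mul_inv_mul_le Φ hΦ hA hS.inv.isHermitian)
          (map_mul_inv_mul_le Φ hΦ hB hS.inv.isHermitian)
    _ = Φ X₀ := by rw [← map_add, ← Matrix.add_mul, ← Matrix.mul_add, hX₀]

end Matrix

/-- Strong (harmonic-mean) convexity of `X ↦ Φ((λ+X)⁻¹)` for a strictly positive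
linear map `Φ`: `Φ((λ+(X+Y)/2)⁻¹) ≤ Φ((λ+X)⁻¹) ! Φ((λ+Y)⁻¹)`. -/
theorem posMap_resolvent_strong_convex {m n : ℕ}
    (Φ : Matrix (Fin m) (Fin m) ℂ →ₗ[ℂ] Matrix (Fin n) (Fin n) ℂ)
    (hΦ : ∀ A : Matrix (Fin m) (Fin m) ℂ, A.PosDef → (Φ A).PosDef)
    (l : ℝ) (hl : 0 ≤ l)
    (X Y : Matrix (Fin m) (Fin m) ℂ) (hX : X.PosDef) (hY : Y.PosDef) :
    (((2 : ℂ)⁻¹ • ((Φ (((l : ℂ) • 1 + X)⁻¹))⁻¹ + (Φ (((l : ℂ) • 1 + Y)⁻¹))⁻¹))⁻¹ -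
      Φ (((l : ℂ) • 1 + (2 : ℂ)⁻¹ • (X + Y))⁻¹)).PosSemidef := by
  have hl1 : ((l : ℂ) • (1 : Matrix (Fin m) (Fin m) ℂ)).PosSemidef :=
    PosSemidef.one.smul (Complex.zero_le_real.mpr hl)
  set C := (l : ℂ) • 1 + X
  set D := (l : ℂ) • 1 + Y
  have hC : C.PosDef := PosDef.posSemidef_add hl1 hX
  have hD : D.PosDef := PosDef.posSemidef_add hl1 hY
  have := hC.isUnit.invertible
  have := hD.isUnit.invertible
  have hparallel := le_iff.mp (map_inv_add_inv_inv_le Φ hΦ hC.inv hD.inv)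
  rw [inv_inv_of_invertible, inv_inv_of_invertible] at hparallel
  have hmid : (l : ℂ) • 1 + (2 : ℂ)⁻¹ • (X + Y) = (2 : ℂ)⁻¹ • (C + D) := by module
  have hCD := (isUnit_iff_isUnit_det _).mp (hC.add hD).isUnit
  have hPQ := (isUnit_iff_isUnit_det _).mp ((hΦ _ hC.inv).inv.add (hΦ _ hD.inv).inv).isUnit
  have : Invertible (2 : ℂ) := invertibleOfNonzero two_ne_zero
  rw [hmid, inv_smul _ (2⁻¹ : ℂ) hCD, inv_smul _ (2⁻¹ : ℂ) hPQ, map_smul, invOf_eq_inv, inv_inv,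
    ← smul_sub]
  exact hparallel.smul zero_le_two
end

section
/- If Φ : Mₘ(ℂ) → Mₙ(ℂ) is a positive linear map and the block matrix [[X, Z],[Z, Y]] (with X, Y positive semidefinite and Z Hermitian) is positive semidefinite, then the block matrix [[Φ(X), Φ(Z)],[Φ(Z), Φ(Y)]] is positive semidefinite. -/
/-!
If `X` is invertible, `X` and `Z` are diagonalized simultaneously by congruence:
`X = R Rᴴ` and `Z = R D Rᴴ` with `D = diag(dᵢ)` real. With the rank-one matrices
`Qᵢ = rᵢ rᵢᴴ` built from the columns of `R` this reads `X = ∑ Qᵢ`, `Z = ∑ dᵢ Qᵢ`, and the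
Schur complement condition reads `Y = ∑ dᵢ² Qᵢ + T` with `T ≥ 0`. By linearity the image
block is then `∑ [[1, dᵢ], [dᵢ, dᵢ²]] ⊗ Φ(Qᵢ) + [[0, 0], [0, Φ(T)]]`, a sum of positive
semidefinite matrices; positivity of `Φ` is only applied to the `Qᵢ` and to `T`, which is
why no `2`-positivity is needed. The general case follows by replacing `X` with `X + ε • 1`
and letting `ε → 0`, since the positive semidefinite cone is closed.
-/

open Matrix ComplexOrder Filter Topology

open scoped MatrixOrder

namespace Matrix

variable {𝕜 m n : Type*} [RCLike 𝕜]

theorem isClosed_setOf_posSemidef [Fintype n] : IsClosed {A : Matrix n n 𝕜 | A.PosSemidef} := by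
  simp only [posSemidef_iff_dotProduct_mulVec, Set.ofPred_and, Set.ofPred_forall]
  refine .inter (isClosed_eq continuous_id.matrix_conjTranspose continuous_id) ?_
  exact isClosed_iInter fun x => isClosed_le continuous_const (by fun_prop)

theorem mul_diagonal_mul_conjTranspose [Fintype m] [DecidableEq m] (R : Matrix n m 𝕜)
    (v : m → 𝕜) :
    R * diagonal v * Rᴴ = ∑ i, v i • vecMulVec (R.col i) (star (R.col i)) := by
  ext a b
  simp [mul_apply, sum_apply, vecMulVec_apply, diagonal_apply, mul_assoc, mul_left_comm]

section

variable [Fintype m] [Fintype n] [DecidableEq m] [DecidableEq n]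

theorem PosSemidef.fromBlocks_offDiag_zero {A : Matrix m m 𝕜} {D : Matrix n n 𝕜}
    (hA : A.PosSemidef) (hD : D.PosSemidef) : (fromBlocks A 0 0 D).PosSemidef := by
  obtain ⟨B, rfl⟩ := CStarAlgebra.nonneg_iff_eq_star_mul_self.mp hA.nonneg
  obtain ⟨C, rfl⟩ := CStarAlgebra.nonneg_iff_eq_star_mul_self.mp hD.nonneg
  convert posSemidef_conjTranspose_mul_self (fromBlocks B 0 0 C) using 1
  simp [fromBlocks_conjTranspose, fromBlocks_multiply, star_eq_conjTranspose]

theorem PosSemidef.fromBlocks_smul_s19 {S : Matrix n n 𝕜} (hS : S.PosSemidef) (c : 𝕜) :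
    (fromBlocks S (c • S) (star c • S) ((star c * c) • S)).PosSemidef := by
  obtain ⟨B, rfl⟩ := CStarAlgebra.nonneg_iff_eq_star_mul_self.mp hS.nonneg
  convert posSemidef_conjTranspose_mul_self (fromBlocks B (c • B) (0 : Matrix n n 𝕜) 0) using 1
  simp [fromBlocks_conjTranspose, fromBlocks_multiply, star_eq_conjTranspose, smul_smul, mul_comm]

theorem PosDef.exists_simultaneous_diagonalization {X Z : Matrix n n 𝕜} (hX : X.PosDef)
    (hZ : Z.IsHermitian) :
    ∃ (R : Matrix n n 𝕜) (d : n → ℝ), IsUnit R ∧ X = R * Rᴴ ∧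
      Z = R * diagonal (fun i => (d i : 𝕜)) * Rᴴ := by
  set S := CFC.sqrt X
  have hSS : Sᴴ * S = X := by
    rw [(CFC.sqrt_nonneg X).posSemidef.isHermitian.eq]
    exact CFC.sqrt_mul_sqrt_self X hX.posSemidef.nonneg
  have hSdet : IsUnit S.det :=
    (isUnit_iff_isUnit_det S).mp (IsStrictlyPositive.isUnit_cfcSqrt X hX.isStrictlyPositive)
  have hSHdet : IsUnit Sᴴ.det := by rw [det_conjTranspose]; exact hSdet.star
  have hW := isHermitian_conjTranspose_mul_mul S⁻¹ hZ
  set W := S⁻¹ᴴ * Z * S⁻¹ with hWdef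
  set U := (hW.eigenvectorUnitary : Matrix n n 𝕜)
  have hUU : U * Uᴴ = 1 := Unitary.mul_star_self_of_mem hW.eigenvectorUnitary.2
  refine ⟨Sᴴ * U, hW.eigenvalues, ?_, ?_, ?_⟩
  · exact ((isUnit_iff_isUnit_det _).mpr hSHdet).mul Unitary.isUnit_coe
  · rw [conjTranspose_mul, conjTranspose_conjTranspose, Matrix.mul_assoc, ← Matrix.mul_assoc U,
      hUU, Matrix.one_mul, hSS]
  · have hspec := hW.spectral_theorem
    rw [Unitary.conjStarAlgAut_apply] at hspec
    calc Z = Sᴴ * W * S := by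
          rw [hWdef, conjTranspose_nonsing_inv]
          simp only [Matrix.mul_assoc, nonsing_inv_mul S hSdet, Matrix.mul_one,
            mul_nonsing_inv_cancel_left (A := Sᴴ) Z hSHdet]
      _ = Sᴴ * (U * diagonal (RCLike.ofReal ∘ hW.eigenvalues) * star U) * S := by rw [← hspec]
      _ = _ := by
          simp only [Matrix.mul_assoc, conjTranspose_mul, star_eq_conjTranspose,
            conjTranspose_conjTranspose]
          rfl

theorem mul_diagonal_mul_conjTranspose_mul_inv_mul {R : Matrix n n 𝕜} (hR : IsUnit R)
    (a b : n → 𝕜) :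
    R * diagonal a * Rᴴ * (R * Rᴴ)⁻¹ * (R * diagonal b * Rᴴ) =
      R * diagonal (fun i => a i * b i) * Rᴴ := by
  have hRdet : IsUnit R.det := (isUnit_iff_isUnit_det R).mp hR
  have hRHdet : IsUnit Rᴴ.det := by rw [det_conjTranspose]; exact hRdet.star
  rw [Matrix.mul_inv_rev, ← diagonal_mul_diagonal]
  simp only [Matrix.mul_assoc, mul_nonsing_inv_cancel_left (A := Rᴴ) _ hRHdet,
    nonsing_inv_mul_cancel_left (A := R) _ hRdet]

theorem posSemidef_fromBlocks_map_of_posDef (Φ : Matrix m m 𝕜 →ₗ[𝕜] Matrix n n 𝕜)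
    (hΦ : ∀ A, A.PosSemidef → (Φ A).PosSemidef) {X Y Z : Matrix m m 𝕜} (hX : X.PosDef)
    (hZ : Z.IsHermitian) (hblock : (fromBlocks X Z Z Y).PosSemidef) :
    (fromBlocks (Φ X) (Φ Z) (Φ Z) (Φ Y)).PosSemidef := by
  obtain ⟨R, d, hR, rfl, rfl⟩ := hX.exists_simultaneous_diagonalization hZ
  set T := Y - R * diagonal (fun i => (d i * d i : 𝕜)) * Rᴴ
  have hT : T.PosSemidef := by
    have := hX.isUnit.invertible
    have hSchur := (PosDef.fromBlocks₁₁ _ Y hX).mp (by rwa [hZ.eq])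
    rwa [hZ.eq, mul_diagonal_mul_conjTranspose_mul_inv_mul hR] at hSchur
  set Q : m → Matrix m m 𝕜 := fun i => vecMulVec (R.col i) (star (R.col i))
  have key : fromBlocks (Φ (R * Rᴴ)) (Φ (R * diagonal (fun i => (d i : 𝕜)) * Rᴴ))
      (Φ (R * diagonal (fun i => (d i : 𝕜)) * Rᴴ)) (Φ Y) =
      ∑ i, fromBlocks (Φ (Q i)) ((d i : 𝕜) • Φ (Q i)) (star (d i : 𝕜) • Φ (Q i))
        ((star (d i : 𝕜) * d i) • Φ (Q i)) + fromBlocks 0 0 0 (Φ T) := by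
    have hXdiag : R * Rᴴ = R * diagonal (fun _ => 1) * Rᴴ := by simp
    have hY : Y = R * diagonal (fun i => (d i * d i : 𝕜)) * Rᴴ + T := (add_sub_cancel _ _).symm
    rw [hXdiag, hY, map_add]
    simp only [mul_diagonal_mul_conjTranspose, map_sum, map_smul, one_smul]
    ext (a | a) (b | b) <;> simp [sum_apply, Q]
  rw [key]
  exact (posSemidef_sum _ fun i _ =>
    (hΦ _ (posSemidef_vecMulVec_self_star _)).fromBlocks_smul_s19 _).add
    (PosSemidef.zero.fromBlocks_offDiag_zero (hΦ _ hT))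

end

end Matrix

theorem posMap_fromBlocks_general {m n : ℕ}
    (Φ : Matrix (Fin m) (Fin m) ℂ →ₗ[ℂ] Matrix (Fin n) (Fin n) ℂ)
    (hΦ : ∀ A : Matrix (Fin m) (Fin m) ℂ, A.PosSemidef → (Φ A).PosSemidef)
    (X Y Z : Matrix (Fin m) (Fin m) ℂ)
    (hX : X.PosSemidef) (hZ : Z.IsHermitian)
    (hblock : (Matrix.fromBlocks X Z Z Y).PosSemidef) :
    (Matrix.fromBlocks (Φ X) (Φ Z) (Φ Z) (Φ Y)).PosSemidef := by
  have hΦc : Continuous Φ := LinearMap.continuous_of_finiteDimensional Φ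
  have hlim : Tendsto (fun ε : ℝ => fromBlocks (Φ (X + (ε : ℂ) • 1)) (Φ Z) (Φ Z) (Φ Y))
      (𝓝[>] 0) (𝓝 (fromBlocks (Φ X) (Φ Z) (Φ Z) (Φ Y))) := by
    refine tendsto_nhdsWithin_of_tendsto_nhds (Continuous.tendsto' ?_ _ _ (by simp))
    fun_prop
  refine isClosed_setOf_posSemidef.mem_of_tendsto hlim ?_
  filter_upwards [self_mem_nhdsWithin] with ε (hε : 0 < ε)
  have hε1 : ((ε : ℂ) • (1 : Matrix (Fin m) (Fin m) ℂ)).PosDef :=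
    PosDef.one.smul (RCLike.ofReal_pos.mpr hε)
  refine posSemidef_fromBlocks_map_of_posDef Φ hΦ (PosDef.posSemidef_add hX hε1) hZ ?_
  simpa [fromBlocks_add] using
    hblock.add (hε1.posSemidef.fromBlocks_offDiag_zero PosSemidef.zero)

/-- Restricted 2-positivity: a positive linear map preserves positive
semidefiniteness of symmetric block matrices `[[X, Z], [Z, Y]]`. -/
theorem posMap_fromBlocks {m n : ℕ}
    (Φ : Matrix (Fin m) (Fin m) ℂ →ₗ[ℂ] Matrix (Fin n) (Fin n) ℂ)
    (hΦ : ∀ A : Matrix (Fin m) (Fin m) ℂ, A.PosSemidef → (Φ A).PosSemidef)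
    (X Y Z : Matrix (Fin m) (Fin m) ℂ)
    (hX : X.PosSemidef) (hY : Y.PosSemidef) (hZ : Z.IsHermitian)
    (hblock : (Matrix.fromBlocks X Z Z Y).PosSemidef) :
    (Matrix.fromBlocks (Φ X) (Φ Z) (Φ Z) (Φ Y)).PosSemidef :=
  posMap_fromBlocks_general Φ hΦ X Y Z hX hZ hblock
end
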